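/- arXiv:2404.18853 — 2 statements merged into one kernel-verified Lean document; each statement's English description precedes it below -/
import Mathlib

section
/- The map φ : (Σ, T_Σ) → [0,1] is continuous, where [0,1] carries the Euclidean topology. -/
/-! With `r = 1/σ₁` (so `r = 0` for `σ₁ = ∞`), one step of the continued fraction is
`x ↦ r / (1 + r x)`, jointly continuous in `(σ₁, x)` because `1/n → 0`; hence every convergent
`[σ₁, …, σ_k]` is continuous on `ℕ∞^ℕ`. Two steps contract distances by `1/4`, so the
convergents converge uniformly and `φ̃` is continuous. Finally `φ̃ ∘ g = φ̃`, since the terms after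
the first `∞` never enter a convergent, and a map out of the coinduced topology is continuous as
soon as its composite with `g` is.
-/

open scoped Classical

noncomputable section

/-- `ℕ∞`: the one-point compactification of the positive integers. -/
abbrev NInf : Type := OnePoint ℕ+

/-- View `NInf` as `Option ℕ+`. -/
def toOpt (m : NInf) : Option ℕ+ := m

/-- View `Option ℕ+` as `NInf`. -/
def ofOpt (o : Option ℕ+) : NInf := o

/-- The reciprocal `1/m`, with the convention `1/∞ = 0`. -/
def rinv (m : NInf) : ℝ :=
  match toOpt m with
  | none => 0
  | some a => 1 / (a : ℝ)

/-- The finite continued fraction `[σ₁, …, σ_k]` computed with the convention `1/∞ = 0`. -/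
def cfVal : ℕ → (ℕ → NInf) → ℝ
  | 0, _ => 0
  | k + 1, σ =>
    match toOpt (σ 0) with
    | none => 0
    | some a => 1 / ((a : ℝ) + cfVal k (fun i => σ (i + 1)))

/-- `φ̃(σ) = lim_k [σ₁, …, σ_k]`. -/
def phiTilde (σ : ℕ → NInf) : ℝ := Filter.limUnder Filter.atTop (fun k => cfVal k σ)

/-- The Gauss map `T̄`, with `T̄(0) = 0`. -/
def Tbar (x : ℝ) : ℝ := if x = 0 then 0 else Int.fract (1 / x)

/-- The first partial quotient `d̄₁(x) = ⌊1/x⌋`, with `d̄₁(0) = ∞`. -/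
def dbar (x : ℝ) : NInf := if x = 0 then OnePoint.infty else ((⌊1 / x⌋₊.toPNat' : ℕ+) : NInf)

/-- `f(x) = (d̄₁(x), d̄₂(x), …)`, the sequence of partial quotients (0-indexed:
`cfSeq x k = d̄_{k+1}(x)`). -/
def cfSeq (x : ℝ) : ℕ → NInf := fun k => dbar (Tbar^[k] x)

/-- `Σ_n`: sequences whose first `n` terms are finite and whose remaining terms are `∞`. -/
def SigmaIdx (n : ℕ) : Set (ℕ → NInf) :=
  {σ | (∀ k < n, σ k ≠ OnePoint.infty) ∧ ∀ k, n ≤ k → σ k = OnePoint.infty}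

/-- `Σ_∞ = ℕ^ℕ`: sequences all of whose terms are finite. -/
def SigmaInfSet : Set (ℕ → NInf) := {σ | ∀ k, σ k ≠ OnePoint.infty}

/-- `Σ = Σ_∞ ∪ ⋃ₙ Σ_n` (note `Σ₀ = SigmaIdx 0`). -/
def SigmaSet : Set (ℕ → NInf) := SigmaInfSet ∪ ⋃ n : ℕ, SigmaIdx n

/-- `σ^{(n)}`: keep the first `n` terms, replace the rest by `∞`. -/
def trunc (n : ℕ) (σ : ℕ → NInf) : ℕ → NInf := fun k => if k < n then σ k else OnePoint.infty

/-- The map `g` forgetting everything after the first `∞`. -/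
def gmap (σ : ℕ → NInf) : ℕ → NInf :=
  if h : ∃ k, σ k = OnePoint.infty then trunc (Nat.find h) σ else σ

theorem gmap_mem (σ : ℕ → NInf) : gmap σ ∈ SigmaSet := by
  unfold gmap
  split_ifs with h
  · refine Or.inr (Set.mem_iUnion.mpr ⟨Nat.find h, ?_, ?_⟩)
    · intro k hk
      simpa [trunc, hk] using Nat.find_min h hk
    · intro k hk
      simp [trunc, Nat.not_lt.mpr hk]
  · exact Or.inl fun k hk => h ⟨k, hk⟩

theorem cfSeq_mem (x : ℝ) : cfSeq x ∈ SigmaSet := by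
  by_cases h : ∃ k, Tbar^[k] x = 0
  · refine Or.inr (Set.mem_iUnion.mpr ⟨Nat.find h, ?_, ?_⟩)
    · intro k hk
      have hne : Tbar^[k] x ≠ 0 := Nat.find_min h hk
      simp [cfSeq, dbar, hne]
    · intro k hk
      have h0 : Tbar^[Nat.find h] x = 0 := Nat.find_spec h
      have : Tbar^[k] x = 0 := by
        have := Function.iterate_add_apply Tbar (k - Nat.find h) (Nat.find h) x
        rw [Nat.sub_add_cancel hk] at this
        rw [this, h0]
        exact Function.iterate_fixed (by simp [Tbar]) _
      simp [cfSeq, dbar, this]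
  · refine Or.inl fun k hk => ?_
    have hne : Tbar^[k] x ≠ 0 := fun h0 => h ⟨k, h0⟩
    simp [cfSeq, dbar, hne] at hk

/-- The space `Σ` (as a type). -/
def Sig : Type := {σ : ℕ → NInf // σ ∈ SigmaSet}

def Sig.mk (σ : ℕ → NInf) (h : σ ∈ SigmaSet) : Sig := ⟨σ, h⟩

def Sig.val (s : Sig) : ℕ → NInf := Subtype.val s

/-- `g`, viewed as a map onto `Σ`. -/
def gS (σ : ℕ → NInf) : Sig := Sig.mk (gmap σ) (gmap_mem σ)

/-- `T_Σ`: the topology on `Σ` coinduced by `g` from the product topology. -/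
instance : TopologicalSpace Sig := TopologicalSpace.coinduced gS inferInstance

/-- `f`, viewed as a map into `Σ`. -/
def fS (x : ℝ) : Sig := Sig.mk (cfSeq x) (cfSeq_mem x)

/-- The metric `ρ` on `ℕ∞`. -/
def rho (m n : NInf) : ℝ := if m = n then 0 else rinv m + rinv n

/-- The metric `ρ^ℕ` on `ℕ∞^ℕ`. -/
def rhoN (σ τ : ℕ → NInf) : ℝ := ∑' k : ℕ, rho (σ k) (τ k) / (Nat.fib (k + 1) : ℝ) ^ 2

/-- Predecessor on `NInf` (finite part). -/
def predNInf (m : NInf) : NInf := ofOpt ((toOpt m).map fun a => a - 1)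

/-- The second continued fraction expansion
`(d̄₁(x), …, d̄_{n-1}(x), d̄_n(x) - 1, 1, ∞, ∞, …)` of a rational `x ∈ (0,1)` with
`f(x) ∈ Σ_n`. -/
def tauOf (x : ℝ) (n : ℕ) : ℕ → NInf := fun k =>
  if k + 1 < n then cfSeq x k
  else if k + 1 = n then predNInf (cfSeq x k)
  else if k = n then ((1 : ℕ+) : NInf)
  else OnePoint.infty


open Filter Topology

lemma rinv_nonneg (m : NInf) : 0 ≤ rinv m := by
  rcases h : toOpt m with _ | a <;> simp only [rinv, h] <;> positivity

lemma rinv_infty : rinv OnePoint.infty = 0 := rfl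

lemma rinv_le_one (m : NInf) : rinv m ≤ 1 := by
  rcases h : toOpt m with _ | a
  · simp [rinv, h]
  · simp only [rinv, h]
    exact div_le_one_of_le₀ (by exact_mod_cast a.pos) (by positivity)

lemma continuous_rinv : Continuous rinv := by
  rw [OnePoint.continuous_iff_from_discrete]
  have h : Tendsto (fun a : ℕ+ => (a : ℕ)) cofinite atTop :=
    Nat.cofinite_eq_atTop ▸ PNat.coe_injective.tendsto_cofinite
  exact tendsto_one_div_atTop_nhds_zero_nat.comp h

/-- `x ↦ 1 / (1/r + x)`, written so that `r = 0` (i.e. a partial quotient `∞`) gives `0`. -/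
def cfStep (r x : ℝ) : ℝ := r / (1 + r * x)

lemma cfVal_succ (k : ℕ) (σ : ℕ → NInf) :
    cfVal (k + 1) σ = cfStep (rinv (σ 0)) (cfVal k fun i => σ (i + 1)) := by
  rcases h : toOpt (σ 0) with _ | a
  · simp [cfVal, rinv, cfStep, h]
  · simp only [cfVal, rinv, cfStep, h]
    have : (0 : ℝ) < a := by positivity
    field_simp

lemma cfStep_nonneg {r x : ℝ} (hr : 0 ≤ r) (hx : 0 ≤ x) : 0 ≤ cfStep r x := by
  unfold cfStep; positivity

lemma cfStep_le {r x : ℝ} (hr : 0 ≤ r) (hx : 0 ≤ x) : cfStep r x ≤ r :=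
  div_le_self hr (le_add_of_nonneg_right (by positivity))

lemma cfVal_mem_Icc (k : ℕ) (σ : ℕ → NInf) : cfVal k σ ∈ Set.Icc (0 : ℝ) 1 := by
  induction k generalizing σ with
  | zero => simp [cfVal]
  | succ k ih =>
    rw [cfVal_succ]
    have hx := (ih fun i => σ (i + 1)).1
    exact ⟨cfStep_nonneg (rinv_nonneg _) hx, (cfStep_le (rinv_nonneg _) hx).trans (rinv_le_one _)⟩

lemma continuous_cfVal (k : ℕ) : Continuous (cfVal k) := by
  induction k with
  | zero => exact continuous_const
  | succ k ih =>
    simp only [funext (cfVal_succ k), cfStep]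
    have hr : Continuous fun σ : ℕ → NInf => rinv (σ 0) :=
      continuous_rinv.comp (continuous_apply 0)
    have hshift : Continuous fun (σ : ℕ → NInf) (i : ℕ) => σ (i + 1) :=
      continuous_pi fun i => continuous_apply (i + 1)
    have hx := ih.comp hshift
    refine hr.div (continuous_const.add (hr.mul hx)) fun σ => ?_
    have := mul_nonneg (rinv_nonneg (σ 0)) (cfVal_mem_Icc k fun i => σ (i + 1)).1
    positivity

lemma cfStep_cfStep {r s x : ℝ} (hr : 0 ≤ r) (hs : 0 ≤ s) (hx : 0 ≤ x) :
    cfStep r (cfStep s x) = r * (1 + s * x) / (1 + s * x + r * s) := by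
  have : 0 < 1 + s * x := by positivity
  have : 0 < 1 + s * x + r * s := by positivity
  unfold cfStep
  field_simp

/-- Two steps of the continued fraction contract by `1/4`: the factor is
`(r s)² / ((1 + s x + r s)(1 + s y + r s)) ≤ (r s / (1 + r s))² ≤ 1/4`. -/
lemma abs_cfStep_cfStep_sub_le {r s x y : ℝ} (hr : 0 ≤ r) (hr1 : r ≤ 1) (hs : 0 ≤ s)
    (hs1 : s ≤ 1) (hx : 0 ≤ x) (hy : 0 ≤ y) :
    |cfStep r (cfStep s x) - cfStep r (cfStep s y)| ≤ |x - y| / 4 := by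
  rw [cfStep_cfStep hr hs hx, cfStep_cfStep hr hs hy]
  have hrs : 0 ≤ r * s := mul_nonneg hr hs
  have hrs1 : r * s ≤ 1 := mul_le_one₀ hr1 hs hs1
  have hDx : 1 + r * s ≤ 1 + s * x + r * s := by nlinarith [mul_nonneg hs hx]
  have hDy : 1 + r * s ≤ 1 + s * y + r * s := by nlinarith [mul_nonneg hs hy]
  have hD : 0 < (1 + s * x + r * s) * (1 + s * y + r * s) := by positivity
  have hdiff : r * (1 + s * x) / (1 + s * x + r * s) - r * (1 + s * y) / (1 + s * y + r * s)
      = (r * s) ^ 2 * (x - y) / ((1 + s * x + r * s) * (1 + s * y + r * s)) := by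
    field_simp
    ring
  have hfactor : 4 * (r * s) ^ 2 ≤ (1 + s * x + r * s) * (1 + s * y + r * s) := by
    nlinarith [mul_le_mul hDx hDy (by positivity) (by positivity)]
  rw [hdiff, abs_div, abs_mul, abs_of_nonneg (by positivity), abs_of_pos hD,
    div_le_div_iff₀ hD (by norm_num)]
  nlinarith [abs_nonneg (x - y)]

lemma abs_cfVal_sub_cfVal_le (σ : ℕ → NInf) {j m n : ℕ} (hm : 2 * j ≤ m) (hn : 2 * j ≤ n) :
    |cfVal m σ - cfVal n σ| ≤ (1 / 4 : ℝ) ^ j := by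
  induction j generalizing σ m n with
  | zero =>
    obtain ⟨hm0, hm1⟩ := cfVal_mem_Icc m σ
    obtain ⟨hn0, hn1⟩ := cfVal_mem_Icc n σ
    simpa using abs_sub_le_of_nonneg_of_le hm0 hm1 hn0 hn1
  | succ j ih =>
    obtain ⟨m, rfl⟩ : ∃ m', m = m' + 2 := ⟨m - 2, by omega⟩
    obtain ⟨n, rfl⟩ : ∃ n', n = n' + 2 := ⟨n - 2, by omega⟩
    simp only [cfVal_succ]
    calc _ ≤ |cfVal m (fun i => σ (i + 1 + 1)) - cfVal n (fun i => σ (i + 1 + 1))| / 4 :=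
          abs_cfStep_cfStep_sub_le (rinv_nonneg _) (rinv_le_one _) (rinv_nonneg _)
            (rinv_le_one _) (cfVal_mem_Icc _ _).1 (cfVal_mem_Icc _ _).1
      _ ≤ (1 / 4 : ℝ) ^ j / 4 := by gcongr; exact ih _ (by omega) (by omega)
      _ = (1 / 4 : ℝ) ^ (j + 1) := by ring

lemma tendsto_cfVal_phiTilde (σ : ℕ → NInf) :
    Tendsto (fun k => cfVal k σ) atTop (𝓝 (phiTilde σ)) := by
  refine CauchySeq.tendsto_limUnder (Metric.cauchySeq_iff'.2 fun ε hε => ?_)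
  obtain ⟨j, hj⟩ := exists_pow_lt_of_lt_one hε (by norm_num : (1 / 4 : ℝ) < 1)
  exact ⟨2 * j, fun n hn => (abs_cfVal_sub_cfVal_le σ hn le_rfl).trans_lt hj⟩

lemma abs_cfVal_sub_phiTilde_le (σ : ℕ → NInf) {j m : ℕ} (hm : 2 * j ≤ m) :
    |cfVal m σ - phiTilde σ| ≤ (1 / 4 : ℝ) ^ j :=
  le_of_tendsto (tendsto_const_nhds.sub (tendsto_cfVal_phiTilde σ)).abs
    (eventually_atTop.2 ⟨2 * j, fun _ hn => abs_cfVal_sub_cfVal_le σ hm hn⟩)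

lemma tendstoUniformly_cfVal : TendstoUniformly cfVal phiTilde atTop := by
  refine Metric.tendstoUniformly_iff.2 fun ε hε => ?_
  obtain ⟨j, hj⟩ := exists_pow_lt_of_lt_one hε (by norm_num : (1 / 4 : ℝ) < 1)
  filter_upwards [eventually_ge_atTop (2 * j)] with m hm σ
  rw [dist_comm, Real.dist_eq]
  exact (abs_cfVal_sub_phiTilde_le σ hm).trans_lt hj

lemma continuous_phiTilde : Continuous phiTilde :=
  tendstoUniformly_cfVal.continuous (Frequently.of_forall continuous_cfVal)

lemma cfVal_trunc (m : ℕ) {n : ℕ} {σ : ℕ → NInf} (hσ : σ n = OnePoint.infty) :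
    cfVal m (trunc n σ) = cfVal m σ := by
  induction m generalizing n σ with
  | zero => rfl
  | succ m ih =>
    rw [cfVal_succ, cfVal_succ]
    cases n with
    | zero => simp [trunc, hσ, rinv_infty, cfStep]
    | succ n =>
      have hshift : (fun i => trunc (n + 1) σ (i + 1)) = trunc n fun i => σ (i + 1) := by
        funext i; simp [trunc]
      have hhead : trunc (n + 1) σ 0 = σ 0 := by simp [trunc]
      rw [hhead, hshift, ih (σ := fun i => σ (i + 1)) hσ]

lemma phiTilde_gmap (σ : ℕ → NInf) : phiTilde (gmap σ) = phiTilde σ := by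
  unfold gmap
  split_ifs with h
  · simp only [phiTilde, cfVal_trunc _ (Nat.find_spec h)]
  · rfl

/-- `φ : (Σ, T_Σ) → [0,1]` is continuous. -/
theorem stmt15 : Continuous fun s : Sig => phiTilde (Sig.val s) := by
  refine continuous_coinduced_dom.mpr ?_
  simpa only [Function.comp_def, gS, Sig.mk, Sig.val, phiTilde_gmap] using continuous_phiTilde
end
end

section
/- Let x ∈ (0,1) be rational, let n ∈ ℕ be such that σ := f(x) ∈ Σ_n, let τ = (d̄_1(x),…,d̄_{n−1}(x), d̄_n(x)−1, 1, ∞, ∞, …) be the other element of φ⁻¹({x}), and let I_n(σ) = {t ∈ [0,1] : d̄_k(t) = σ_k for 1 ≤ k ≤ n} be the fundamental interval of σ. Then f(t) → σ in (Σ, T_Σ) as t → x with t ∈ I_n(σ), and f(t) → τ in (Σ, T_Σ) as t → x with t ∈ [0,1] \ I_n(σ). -/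
open scoped Classical

/-! Write `n = m + 1`. Since `f(x) ∈ Σ_{m+1}`, the iterates `T̄^k x`, `k ≤ m`, are nonzero and
`1/T̄^k x` is not an integer for `k < m`, so near `x` the first `m` partial quotients are constant
and `T̄^m` is continuous; moreover `T̄^m x = 1/δ` with `δ = d̄_{m+1}(x)`. Inside `I_{m+1}(σ)` the
quotient `δ` is kept, so `T̄^{m+1} t = 1/T̄^m t - δ → 0` and the next quotient tends to `∞`.
Outside, `1/T̄^m t` is close to `δ` but has a different integer part, hence `δ - 1`; then
`T̄^{m+1} t → 1`, the next quotient is eventually `1`, and `T̄^{m+2} t → 0`.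

Convergence in `T_Σ` follows from compactness of `ℕ∞^ℕ`: if the first `j + 1` coordinates of
`f(t)` converge to those of `σ ∈ Σ_j`, every cluster point of `f(t)` lies in the fibre `g⁻¹(σ)`,
and `g` is continuous. -/

open Filter Topology Set

lemma Int.eventually_floor_eq {α : Type*} [Ring α] [LinearOrder α] [IsStrictOrderedRing α]
    [FloorRing α] [TopologicalSpace α] [OrderTopology α] {z : α} (hz : z ≠ ⌊z⌋) :
    ∀ᶠ w in 𝓝 z, ⌊w⌋ = ⌊z⌋ :=
  mem_of_superset (Ico_mem_nhds ((Int.floor_le z).lt_of_ne hz.symm) (Int.lt_floor_add_one z))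
    fun _ hw => Int.floor_eq_on_Ico _ _ hw

lemma tbar_nonneg (x : ℝ) : 0 ≤ Tbar x := by
  unfold Tbar; split_ifs
  exacts [le_rfl, Int.fract_nonneg _]

lemma tbar_lt_one (x : ℝ) : Tbar x < 1 := by
  unfold Tbar; split_ifs
  exacts [one_pos, Int.fract_lt_one _]

lemma tbar_iterate_mem_Icc {t : ℝ} (ht : t ∈ Icc 0 1) : ∀ k, Tbar^[k] t ∈ Icc 0 1
  | 0 => ht
  | k + 1 => by
    rw [Function.iterate_succ_apply']
    exact ⟨tbar_nonneg _, (tbar_lt_one _).le⟩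

lemma tbar_iterate_lt_one {x : ℝ} (hx : x < 1) : ∀ k, Tbar^[k] x < 1
  | 0 => hx
  | k + 1 => by rw [Function.iterate_succ_apply']; exact tbar_lt_one _

lemma tbar_of_ne_zero {s : ℝ} (hs : s ≠ 0) : Tbar s = Int.fract (1 / s) := if_neg hs

lemma tbar_of_pos {s : ℝ} (hs : 0 < s) : Tbar s = 1 / s - ⌊1 / s⌋₊ := by
  rw [tbar_of_ne_zero hs.ne', Int.fract, ← Int.natCast_floor_eq_floor (by positivity)]
  push_cast; ring

lemma dbar_of_ne_zero {s : ℝ} (hs : s ≠ 0) : dbar s = ((⌊1 / s⌋₊.toPNat' : ℕ+) : NInf) :=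
  if_neg hs

lemma dbar_eq_infty_iff {s : ℝ} : dbar s = OnePoint.infty ↔ s = 0 := by
  by_cases hs : s = 0
  · simp [dbar, hs]
  · simp [dbar_of_ne_zero hs, hs]

lemma dbar_eq_coe_of_floor_eq {s : ℝ} {d : ℕ+} (h : ⌊1 / s⌋₊ = d) : dbar s = d := by
  have hs : s ≠ 0 := by rintro rfl; simp at h; exact d.ne_zero h.symm
  rw [dbar_of_ne_zero hs, h, PNat.coe_toPNat']

lemma floor_eq_of_dbar_eq_coe {s : ℝ} (hs : s ∈ Icc 0 1) {d : ℕ+} (h : dbar s = d) :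
    ⌊1 / s⌋₊ = d := by
  have hs0 : s ≠ 0 := by rintro rfl; simp [dbar] at h
  have hpos : 0 < ⌊1 / s⌋₊ :=
    Nat.floor_pos.2 (one_le_one_div (lt_of_le_of_ne hs.1 (Ne.symm hs0)) hs.2)
  rw [dbar_of_ne_zero hs0, OnePoint.coe_eq_coe] at h
  rw [← h, PNat.toPNat'_coe hpos]

lemma inv_ne_floor_of_tbar_ne_zero {y : ℝ} (hy : y ≠ 0) (hTy : Tbar y ≠ 0) :
    1 / y ≠ ⌊1 / y⌋ :=
  fun h => hTy (by rw [tbar_of_ne_zero hy, Int.fract, ← h, sub_self])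

lemma eventually_dbar_eq {y : ℝ} (hy : y ≠ 0) (hTy : Tbar y ≠ 0) :
    ∀ᶠ s in 𝓝 y, dbar s = dbar y := by
  have hfloor := (tendsto_const_nhds.div tendsto_id hy).eventually
    (Int.eventually_floor_eq (inv_ne_floor_of_tbar_ne_zero hy hTy))
  filter_upwards [eventually_ne_nhds hy, hfloor] with s hs hfloor
  rw [dbar_of_ne_zero hs, dbar_of_ne_zero hy, ← Int.floor_toNat]
  simp only [id, Pi.div_apply] at hfloor
  rw [hfloor, Int.floor_toNat]

lemma continuousAt_tbar {y : ℝ} (hy : y ≠ 0) (hTy : Tbar y ≠ 0) : ContinuousAt Tbar y := by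
  refine ((continuousAt_fract (inv_ne_floor_of_tbar_ne_zero hy hTy)).comp
    (continuousAt_const.div continuousAt_id hy)).congr ?_
  filter_upwards [eventually_ne_nhds hy] with s hs
  exact (tbar_of_ne_zero hs).symm

lemma continuousAt_tbar_iterate {x : ℝ} :
    ∀ {j : ℕ}, (∀ k ≤ j, Tbar^[k] x ≠ 0) → ContinuousAt Tbar^[j] x
  | 0, _ => continuousAt_id
  | j + 1, h => by
    have hTy : Tbar (Tbar^[j] x) ≠ 0 := by
      rw [← Function.iterate_succ_apply' Tbar j]; exact h (j + 1) le_rfl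
    rw [Function.iterate_succ']
    exact (continuousAt_tbar (h j j.le_succ) hTy).comp
      (continuousAt_tbar_iterate fun k hk => h k (hk.trans j.le_succ))

lemma eventually_cfSeq_eq {x : ℝ} {j : ℕ} (h : ∀ k ≤ j + 1, Tbar^[k] x ≠ 0) :
    ∀ᶠ t in 𝓝 x, cfSeq t j = cfSeq x j := by
  have hTy : Tbar (Tbar^[j] x) ≠ 0 := by
    rw [← Function.iterate_succ_apply' Tbar j]; exact h (j + 1) le_rfl
  exact (continuousAt_tbar_iterate fun k hk => h k (hk.trans j.le_succ)).eventually
    (eventually_dbar_eq (h j j.le_succ) hTy)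

lemma eventually_cfSeq_prefix_eq {x : ℝ} {m : ℕ} (h : ∀ k ≤ m, Tbar^[k] x ≠ 0) :
    ∀ᶠ t in 𝓝 x, ∀ k < m, cfSeq t k = cfSeq x k :=
  (finite_Iio m).eventually_all.2 fun _ hk =>
    eventually_cfSeq_eq fun i hi => h i (hi.trans (Nat.succ_le_of_lt hk))

lemma tendsto_coe_pnat_atTop_infty : Tendsto ((↑) : ℕ+ → NInf) atTop (𝓝 OnePoint.infty) :=
  OnePoint.tendsto_coe_infty.mono_left <| by
    rw [coclosedCompact_eq_cocompact, cocompact_eq_cofinite]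
    exact atTop_le_cofinite

lemma tendsto_dbar_nhdsGE_zero : Tendsto dbar (𝓝[≥] 0) (𝓝 OnePoint.infty) := by
  rw [← Ioi_union_left, nhdsWithin_union, nhdsWithin_singleton]
  refine Tendsto.sup ?_ (by simpa [dbar] using tendsto_pure_nhds dbar (0 : ℝ))
  have hfloor : Tendsto (fun s : ℝ => ⌊1 / s⌋₊.toPNat') (𝓝[>] 0) atTop := by
    refine tendsto_atTop.2 fun b => ?_
    have hinv := tendsto_nat_floor_atTop.comp (tendsto_inv_nhdsGT_zero (𝕜 := ℝ))
    filter_upwards [hinv.eventually_ge_atTop (b : ℕ)] with s hs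
    rw [← PNat.coe_le_coe, PNat.toPNat'_coe (b.pos.trans_le (by simpa using hs))]
    simpa using hs
  refine (tendsto_coe_pnat_atTop_infty.comp hfloor).congr' ?_
  filter_upwards [self_mem_nhdsWithin] with s hs
  exact (dbar_of_ne_zero (ne_of_gt hs)).symm

lemma tendsto_cfSeq_infty {F : Filter ℝ} {j : ℕ} (h : Tendsto Tbar^[j] F (𝓝 0))
    (hnonneg : ∀ᶠ t in F, 0 ≤ Tbar^[j] t) :
    Tendsto (fun t => cfSeq t j) F (𝓝 OnePoint.infty) :=
  tendsto_dbar_nhdsGE_zero.comp (tendsto_nhdsWithin_iff.2 ⟨h, hnonneg⟩)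

lemma tendsto_cfSeq_of_eventually_floor_eq {F : Filter ℝ} {j : ℕ} {d : ℕ+}
    (h : ∀ᶠ t in F, ⌊1 / Tbar^[j] t⌋₊ = d) : Tendsto (fun t => cfSeq t j) F (𝓝 d) :=
  tendsto_const_nhds.congr' (h.mono fun _ ht => (dbar_eq_coe_of_floor_eq ht).symm)

lemma tendsto_tbar_iterate_succ {F : Filter ℝ} {j : ℕ} {c : ℝ}
    (hv : Tendsto Tbar^[j] F (𝓝 c)) (hc : 0 < c) {d : ℕ} (hd : ∀ᶠ t in F, ⌊1 / Tbar^[j] t⌋₊ = d) :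
    Tendsto Tbar^[j + 1] F (𝓝 (1 / c - d)) := by
  refine ((tendsto_const_nhds.div hv hc.ne').sub tendsto_const_nhds).congr' ?_
  filter_upwards [hv.eventually_const_lt hc, hd] with t hpos hfloor
  rw [Function.iterate_succ_apply', tbar_of_pos hpos, hfloor]
  rfl

lemma eventually_floor_inv_eq_one {F : Filter ℝ} {w : ℝ → ℝ} (hw : Tendsto w F (𝓝 1))
    (hw1 : ∀ᶠ t in F, w t ≤ 1) : ∀ᶠ t in F, ⌊1 / w t⌋₊ = 1 := by
  filter_upwards [hw.eventually_const_lt one_half_lt_one, hw1] with t hhalf hle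
  have hpos : 0 < w t := one_half_pos.trans hhalf
  rw [Nat.floor_eq_iff (one_div_nonneg.2 hpos.le), Nat.cast_one, le_div_iff₀ hpos,
    div_lt_iff₀ hpos]
  constructor <;> linarith

lemma gmap_eq_of_agree {base σ : ℕ → NInf} {j : ℕ} (hb : base ∈ SigmaIdx j)
    (hσ : ∀ k ≤ j, σ k = base k) : gmap σ = base := by
  have hσj : σ j = OnePoint.infty := (hσ j le_rfl).trans (hb.2 j le_rfl)
  have hex : ∃ k, σ k = OnePoint.infty := ⟨j, hσj⟩
  have hfind : Nat.find hex = j :=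
    (Nat.find_eq_iff hex).2 ⟨hσj, fun k hk => (hσ k hk.le).symm ▸ hb.1 k hk⟩
  funext k
  rw [gmap, dif_pos hex, hfind, trunc]
  split_ifs with hk
  · exact hσ k hk.le
  · exact (hb.2 k (not_lt.1 hk)).symm

lemma gmap_eq_self {σ : ℕ → NInf} (h : σ ∈ SigmaSet) : gmap σ = σ := by
  rcases h with h | h
  · exact dif_neg fun ⟨k, hk⟩ => h k hk
  · obtain ⟨j, hj⟩ := mem_iUnion.1 h
    exact gmap_eq_of_agree hj fun _ _ => rfl

lemma tendsto_fS {F : Filter ℝ} {j : ℕ} {base : ℕ → NInf} (hb : base ∈ SigmaIdx j)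
    (hbS : base ∈ SigmaSet) (h : ∀ k ≤ j, Tendsto (fun t => cfSeq t k) F (𝓝 (base k))) :
    Tendsto fS F (𝓝 (Sig.mk base hbS)) := by
  have hfiber : Tendsto cfSeq F (𝓝ˢ {σ | ∀ k ≤ j, σ k = base k}) := by
    refine isCompact_univ.tendsto_nhdsSet_of_mapClusterPt (univ_mem' fun _ => trivial)
      fun σ _ hσ k hk => ?_
    have hσk : MapClusterPt (σ k) F (fun t => cfSeq t k) :=
      hσ.continuousAt_comp (continuous_apply k).continuousAt
    exact eq_of_nhds_neBot (hσk.neBot.mono (inf_le_inf_left _ (h k hk)))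
  have hgS : Tendsto gS (𝓝ˢ {σ | ∀ k ≤ j, σ k = base k}) (𝓝 (Sig.mk base hbS)) :=
    continuous_coinduced_rng.tendsto_nhdsSet_nhds fun σ hσ =>
      Subtype.ext (gmap_eq_of_agree hb hσ)
  exact (hgS.comp hfiber).congr fun t => Subtype.ext (gmap_eq_self (cfSeq_mem t))

def cfCylinder (x : ℝ) (n : ℕ) : Set ℝ := {t | ∀ k < n, cfSeq t k = cfSeq x k}

lemma tbar_iterate_ne_zero_of_mem_SigmaIdx {x : ℝ} {m : ℕ}
    (hσ : cfSeq x ∈ SigmaIdx (m + 1)) : ∀ k ≤ m, Tbar^[k] x ≠ 0 :=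
  fun k hk h => hσ.1 k (Nat.lt_succ_of_le hk) (dbar_eq_infty_iff.2 h)

lemma exists_cfSeq_eq_of_mem_SigmaIdx {x : ℝ} (hx : x ∈ Icc 0 1) {m : ℕ}
    (hσ : cfSeq x ∈ SigmaIdx (m + 1)) :
    ∃ δ : ℕ+, cfSeq x m = δ ∧ 0 < Tbar^[m] x ∧ 1 / Tbar^[m] x = δ := by
  obtain ⟨δ, hδ⟩ := OnePoint.ne_infty_iff_exists.1 (hσ.1 m m.lt_succ_self)
  have hpos : 0 < Tbar^[m] x := lt_of_le_of_ne (tbar_iterate_mem_Icc hx m).1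
    (tbar_iterate_ne_zero_of_mem_SigmaIdx hσ m le_rfl).symm
  have hTy : Tbar (Tbar^[m] x) = 0 := by
    rw [← Function.iterate_succ_apply' Tbar m, ← dbar_eq_infty_iff]
    exact hσ.2 (m + 1) le_rfl
  rw [tbar_of_pos hpos, floor_eq_of_dbar_eq_coe (tbar_iterate_mem_Icc hx m) hδ.symm,
    sub_eq_zero] at hTy
  exact ⟨δ, hδ.symm, hpos, hTy⟩

lemma tauOf_apply_of_succ_lt {x : ℝ} {n k : ℕ} (hk : k + 1 < n) : tauOf x n k = cfSeq x k :=
  if_pos hk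

lemma tauOf_apply_pred {x : ℝ} {m : ℕ} {δ : ℕ+} (hδ : cfSeq x m = δ) :
    tauOf x (m + 1) m = (δ - 1 : ℕ+) := by
  simp only [tauOf, lt_irrefl, if_false, if_true, hδ]
  rfl

lemma tauOf_apply_self (x : ℝ) (n : ℕ) : tauOf x n n = (1 : ℕ+) := by
  simp [tauOf]

lemma tauOf_apply_of_lt {x : ℝ} {n k : ℕ} (hk : n < k) : tauOf x n k = OnePoint.infty := by
  simp only [tauOf]
  rw [if_neg (by omega), if_neg (by omega), if_neg (by omega)]

lemma tauOf_mem_SigmaIdx {x : ℝ} {m : ℕ} (hσ : cfSeq x ∈ SigmaIdx (m + 1)) :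
    tauOf x (m + 1) ∈ SigmaIdx (m + 2) := by
  refine ⟨fun k hk => ?_, fun k hk => tauOf_apply_of_lt (by omega)⟩
  obtain hk | rfl | rfl : k < m ∨ k = m ∨ k = m + 1 := by omega
  · rw [tauOf_apply_of_succ_lt (by omega)]
    exact hσ.1 k (by omega)
  · obtain ⟨δ, hδ⟩ := OnePoint.ne_infty_iff_exists.1 (hσ.1 k k.lt_succ_self)
    rw [tauOf_apply_pred hδ.symm]
    exact OnePoint.coe_ne_infty _
  · rw [tauOf_apply_self]
    exact OnePoint.coe_ne_infty _

lemma tendsto_fS_nhdsWithin_cfCylinder {x : ℝ} (hx : x ∈ Icc 0 1) {m : ℕ}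
    (hσ : cfSeq x ∈ SigmaIdx (m + 1)) :
    Tendsto fS (𝓝[Icc 0 1 ∩ cfCylinder x (m + 1)] x) (𝓝 (fS x)) := by
  obtain ⟨δ, hδ, hy0, hyδ⟩ := exists_cfSeq_eq_of_mem_SigmaIdx hx hσ
  have hT := (continuousAt_tbar_iterate (tbar_iterate_ne_zero_of_mem_SigmaIdx hσ)).tendsto
    |>.mono_left (nhdsWithin_le_nhds (s := Icc 0 1 ∩ cfCylinder x (m + 1)))
  have hT1 := tendsto_tbar_iterate_succ hT hy0 (d := δ) <| by
    filter_upwards [self_mem_nhdsWithin] with t ht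
    exact floor_eq_of_dbar_eq_coe (tbar_iterate_mem_Icc ht.1 m) ((ht.2 m m.lt_succ_self).trans hδ)
  rw [hyδ, sub_self] at hT1
  refine tendsto_fS hσ (cfSeq_mem x) fun k hk => ?_
  rcases hk.lt_or_eq with hk | rfl
  · refine tendsto_const_nhds.congr' ?_
    filter_upwards [self_mem_nhdsWithin] with t ht
    exact (ht.2 k hk).symm
  · rw [hσ.2 (m + 1) le_rfl]
    refine tendsto_cfSeq_infty hT1 ?_
    filter_upwards [self_mem_nhdsWithin] with t ht
    exact (tbar_iterate_mem_Icc ht.1 _).1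

lemma eventually_floor_inv_iterate_eq_pred {x : ℝ} {m : ℕ}
    (hσ : cfSeq x ∈ SigmaIdx (m + 1)) {δ : ℕ+} (hδ : cfSeq x m = δ) (hyδ : 1 / Tbar^[m] x = δ) :
    ∀ᶠ t in 𝓝[Icc 0 1 \ cfCylinder x (m + 1)] x, ⌊1 / Tbar^[m] t⌋₊ = (δ : ℕ) - 1 := by
  have hnz := tbar_iterate_ne_zero_of_mem_SigmaIdx hσ
  have hinv : Tendsto (fun t => 1 / Tbar^[m] t) (𝓝 x) (𝓝 (δ : ℝ)) := by
    rw [← hyδ]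
    exact tendsto_const_nhds.div (continuousAt_tbar_iterate hnz) (by simpa using hnz m le_rfl)
  have hnear : ∀ᶠ t in 𝓝 x, (δ : ℝ) - 1 < 1 / Tbar^[m] t ∧ 1 / Tbar^[m] t < δ + 1 :=
    hinv.eventually (Ioo_mem_nhds (by linarith) (by linarith))
  filter_upwards [nhdsWithin_le_nhds (eventually_cfSeq_prefix_eq hnz),
    nhdsWithin_le_nhds hnear, self_mem_nhdsWithin] with t hprefix hbounds hmem
  have hne : ⌊1 / Tbar^[m] t⌋₊ ≠ δ := fun h => hmem.2 fun k hk =>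
    (Nat.lt_succ_iff_lt_or_eq.1 hk).elim (hprefix k) fun hkm =>
      hkm ▸ (dbar_eq_coe_of_floor_eq h).trans hδ.symm
  have hge : (δ : ℕ) - 1 ≤ ⌊1 / Tbar^[m] t⌋₊ :=
    Nat.le_floor (by rw [Nat.cast_pred δ.pos]; exact hbounds.1.le)
  have hlt : ⌊1 / Tbar^[m] t⌋₊ < δ + 1 :=
    (Nat.floor_lt (one_div_nonneg.2 (tbar_iterate_mem_Icc hmem.1 m).1)).2
      (by exact_mod_cast hbounds.2)
  omega

lemma tendsto_fS_nhdsWithin_diff_cfCylinder {x : ℝ} (hx0 : 0 < x) (hx1 : x < 1) {m : ℕ}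
    (hσ : cfSeq x ∈ SigmaIdx (m + 1)) (hτ : tauOf x (m + 1) ∈ SigmaSet) :
    Tendsto fS (𝓝[Icc 0 1 \ cfCylinder x (m + 1)] x) (𝓝 (Sig.mk (tauOf x (m + 1)) hτ)) := by
  obtain ⟨δ, hδ, hy0, hyδ⟩ := exists_cfSeq_eq_of_mem_SigmaIdx ⟨hx0.le, hx1.le⟩ hσ
  have hδ1 : 1 < δ := by
    have h := one_lt_one_div hy0 (tbar_iterate_lt_one hx1 m)
    rw [hyδ] at h
    exact_mod_cast h
  have hpred : ((δ - 1 : ℕ+) : ℕ) = δ - 1 := by rw [PNat.sub_coe, if_pos hδ1]; rfl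
  have hnz := tbar_iterate_ne_zero_of_mem_SigmaIdx hσ
  have hfloor := eventually_floor_inv_iterate_eq_pred hσ hδ hyδ
  have hT1 := tendsto_tbar_iterate_succ
    ((continuousAt_tbar_iterate hnz).tendsto.mono_left nhdsWithin_le_nhds) hy0 hfloor
  rw [hyδ, Nat.cast_pred δ.pos, sub_sub_cancel] at hT1
  have hfloor1 := eventually_floor_inv_eq_one hT1 <| Eventually.of_forall fun t => by
    rw [Function.iterate_succ_apply']; exact (tbar_lt_one _).le
  have hT2 := tendsto_tbar_iterate_succ hT1 one_pos hfloor1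
  rw [Nat.cast_one, div_one, sub_self] at hT2
  refine tendsto_fS (tauOf_mem_SigmaIdx hσ) hτ fun k hk => ?_
  obtain hk | rfl | rfl | rfl : k < m ∨ k = m ∨ k = m + 1 ∨ k = m + 2 := by omega
  · rw [tauOf_apply_of_succ_lt (by omega)]
    exact tendsto_const_nhds.congr' <|
      ((eventually_cfSeq_prefix_eq hnz).filter_mono nhdsWithin_le_nhds).mono
        fun _ ht => (ht k hk).symm
  · rw [tauOf_apply_pred hδ]
    exact tendsto_cfSeq_of_eventually_floor_eq (hpred ▸ hfloor)
  · rw [tauOf_apply_self]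
    exact tendsto_cfSeq_of_eventually_floor_eq hfloor1
  · rw [tauOf_apply_of_lt (by omega)]
    exact tendsto_cfSeq_infty hT2 <| Eventually.of_forall fun t => by
      rw [Function.iterate_succ_apply']; exact tbar_nonneg _

theorem stmt17_general (x : ℝ) (hx0 : 0 < x) (hx1 : x < 1)
    (n : ℕ) (hn : 0 < n) (hσ : cfSeq x ∈ SigmaIdx n) (hτ : tauOf x n ∈ SigmaSet) :
    Filter.Tendsto fS
      (nhdsWithin x ({t | t ∈ Set.Icc (0 : ℝ) 1 ∧ ∀ k < n, cfSeq t k = cfSeq x k} \ {x}))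
      (nhds (fS x)) ∧
    Filter.Tendsto fS
      (nhdsWithin x ({t | t ∈ Set.Icc (0 : ℝ) 1 ∧ ¬ ∀ k < n, cfSeq t k = cfSeq x k} \ {x}))
      (nhds (Sig.mk (tauOf x n) hτ)) := by
  obtain ⟨m, rfl⟩ : ∃ m, n = m + 1 := ⟨n - 1, by omega⟩
  exact ⟨(tendsto_fS_nhdsWithin_cfCylinder ⟨hx0.le, hx1.le⟩ hσ).mono_left
      (nhdsWithin_mono _ sdiff_subset),
    (tendsto_fS_nhdsWithin_diff_cfCylinder hx0 hx1 hσ hτ).mono_left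
      (nhdsWithin_mono _ sdiff_subset)⟩

/-- One-sided continuity at rationals: for rational `x ∈ (0,1)` with
`σ := f(x) ∈ Σ_n` and `τ` the other continued fraction expansion of `x`, `f(t) → σ` as
`t → x` within the fundamental interval `I_n(σ)`, and `f(t) → τ` as `t → x` within
`[0,1] \ I_n(σ)`. -/
theorem stmt17 (x : ℝ) (hx0 : 0 < x) (hx1 : x < 1) (hxq : ∃ q : ℚ, (q : ℝ) = x)
    (n : ℕ) (hn : 0 < n) (hσ : cfSeq x ∈ SigmaIdx n) (hτ : tauOf x n ∈ SigmaSet) :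
    Filter.Tendsto fS
      (nhdsWithin x ({t | t ∈ Set.Icc (0 : ℝ) 1 ∧ ∀ k < n, cfSeq t k = cfSeq x k} \ {x}))
      (nhds (fS x)) ∧
    Filter.Tendsto fS
      (nhdsWithin x ({t | t ∈ Set.Icc (0 : ℝ) 1 ∧ ¬ ∀ k < n, cfSeq t k = cfSeq x k} \ {x}))
      (nhds (Sig.mk (tauOf x n) hτ)) :=
  stmt17_general x hx0 hx1 n hn hσ hτ
end
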